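/- Assume: (i) every nodal concentration value lies in [0,1] (0 ≤ c⁺_{j−1/2} ≤ 1 and 0 ≤ c⁻_{j+1/2} ≤ 1 for every cell j, equivalently 0 ≤ r ≤ Φ at every node); (ii) α > max{u⁺_{j+1/2}, 0} for every 1 ≤ j ≤ N−1; (iii) α̃ > D_M/2 with D_M the maximum of all D⁻_{j+1/2}, D⁺_{j+1/2} over 1 ≤ j ≤ N−1; (iv) 6αλ ≤ Φ_m with Φ_m = min over 1 ≤ j ≤ N−1 of Φ_{j+1/2}, and 6λ(α − u⁺_{j+1/2}) ≤ Φ_{j+1/2} for every 1 ≤ j ≤ N−1; (v) Λ(3D⁻_{j+1/2} + 6α̃) ≤ Φ_{j−1/2} for 1 ≤ j ≤ N−1, Λ(3D⁺_{j−1/2} + 6α̃) ≤ Φ_{j+1/2} for 2 ≤ j ≤ N, and 6Λα̃ ≤ Φ_{j+1/2} for every 0 ≤ j ≤ N; (vi) z₁ ≥ 0 and z₂ ≥ 0, and for every cell j and i ∈ {1,2}: 6Δt·z₁·max{P_j^i,0} ≤ 1, 6Δt·z₂·max{P_j^i,0} ≤ 1, 0 ≤ c̃_j^i ≤ 1, if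 q_j^i < 0 then c̃_j^i = c(x_j^i) and 6Δt(−q_j^i) < min{Φ_{j−1/2}, Φ_{j+1/2}}; (vii) the discrete pressure relation holds in every cell j: (Δx/2)·∑_{i=1,2}(z₁·r(x_j^i) + z₂·(Φ(x_j^i) − r(x_j^i)))·P_j^i = û_{j−1/2} − û_{j+1/2} + (Δx/2)·∑_{i=1,2} q_j^i, where û_{j+1/2} = u⁺_{j+1/2} for 1 ≤ j ≤ N−1, û_{1/2} = û_{N+1/2} = 0, and Φ(x_j^1) = μ₁Φ_{j−1/2} + μ₂Φ_{j+1/2}, Φ(x_j^2) = μ₂Φ_{j−1/2} + μ₁Φ_{j+1/2}. Then the Euler-forward cell-average update satisfies 0 ≤ r̄_j^{new} ≤ Φ̄_j := (Φ_{j−1/2} + Φ_{j+1/2})/2 for every cell j = 1,…,N. -/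

import Mathlib

noncomputable section

namespace DG1D

/-- Gauss constant `μ₁ = (3+√3)/6`. -/
def mu1 : ℝ := (3 + Real.sqrt 3) / 6

/-- Gauss constant `μ₂ = (3-√3)/6`. -/
def mu2 : ℝ := (3 - Real.sqrt 3) / 6

/-- Cell average `r̄_j = (r⁺_{j-1/2} + r⁻_{j+1/2})/2`.  Here `Φ j` denotes the nodal
porosity value `Φ_{j+1/2}` (so `Φ (j-1)` is `Φ_{j-1/2}`), `cP j` denotes the left-node
concentration trace `c⁺_{j-1/2}` of cell `j`, and `cM j` denotes the right-node trace
`c⁻_{j+1/2}` of cell `j`. -/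
def rbar (Φ cP cM : ℕ → ℝ) (j : ℕ) : ℝ :=
  (cP j * Φ (j - 1) + cM j * Φ j) / 2

/-- Convective flux `ûc_{j+1/2} = u⁺_{j+1/2}·c⁺_{j+1/2} - α·[c]_{j+1/2}` at the interior
node `j+1/2` (`u j` denotes `u⁺_{j+1/2}`; `c⁺_{j+1/2} = cP (j+1)`, `c⁻_{j+1/2} = cM j`). -/
def uc (u cP cM : ℕ → ℝ) (α : ℝ) (j : ℕ) : ℝ :=
  u j * cP (j + 1) - α * (cP (j + 1) - cM j)

/-- Diffusive flux `F̂_{j+1/2} = (D⁻·(c_x)⁻ + D⁺·(c_x)⁺)/2 + (α̃/Δx)·[c]_{j+1/2}` at the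
interior node `j+1/2`, with `(c_x)⁻_{j+1/2} = (c⁻_{j+1/2} - c⁺_{j-1/2})/Δx` and
`(c_x)⁺_{j+1/2} = (c⁻_{j+3/2} - c⁺_{j+1/2})/Δx`. -/
def Fhat (Dm Dp cP cM : ℕ → ℝ) (αt Δx : ℝ) (j : ℕ) : ℝ :=
  (Dm j * ((cM j - cP j) / Δx) + Dp j * ((cM (j + 1) - cP (j + 1)) / Δx)) / 2
    + (αt / Δx) * (cP (j + 1) - cM j)

/-- Value of the linear function `r` at Gauss point `i` of cell `j`:
`r(x_j^1) = μ₁·r⁺_{j-1/2} + μ₂·r⁻_{j+1/2}`, `r(x_j^2) = μ₂·r⁺_{j-1/2} + μ₁·r⁻_{j+1/2}`. -/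
def rG (Φ cP cM : ℕ → ℝ) (j : ℕ) (i : Fin 2) : ℝ :=
  if i = 0 then mu1 * (cP j * Φ (j - 1)) + mu2 * (cM j * Φ j)
  else mu2 * (cP j * Φ (j - 1)) + mu1 * (cM j * Φ j)

/-- Value of the linear function `c` at Gauss point `i` of cell `j`. -/
def cG (cP cM : ℕ → ℝ) (j : ℕ) (i : Fin 2) : ℝ :=
  if i = 0 then mu1 * cP j + mu2 * cM j else mu2 * cP j + mu1 * cM j

/-- Value of the linear interpolant of `Φ` at Gauss point `i` of cell `j`. -/
def phiG (Φ : ℕ → ℝ) (j : ℕ) (i : Fin 2) : ℝ :=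
  if i = 0 then mu1 * Φ (j - 1) + mu2 * Φ j else mu2 * Φ (j - 1) + mu1 * Φ j

/-- Convective flux with the boundary conventions `ûc_{1/2} = ûc_{N+1/2} = 0`. -/
def ucB (N : ℕ) (u cP cM : ℕ → ℝ) (α : ℝ) (j : ℕ) : ℝ :=
  if 1 ≤ j ∧ j ≤ N - 1 then uc u cP cM α j else 0

/-- Diffusive flux with the boundary conventions `F̂_{1/2} = F̂_{N+1/2} = 0`. -/
def FhatB (N : ℕ) (Dm Dp cP cM : ℕ → ℝ) (αt Δx : ℝ) (j : ℕ) : ℝ :=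
  if 1 ≤ j ∧ j ≤ N - 1 then Fhat Dm Dp cP cM αt Δx j else 0

/-- Velocity flux `û_{j+1/2}` with boundary conventions `û_{1/2} = û_{N+1/2} = 0`. -/
def uhatB (N : ℕ) (u : ℕ → ℝ) (j : ℕ) : ℝ :=
  if 1 ≤ j ∧ j ≤ N - 1 then u j else 0

/-- The Euler-forward cell-average update
`r̄_j^{new} = r̄_j + λ(ûc_{j-1/2} - ûc_{j+1/2}) - λ(F̂_{j-1/2} - F̂_{j+1/2})
  + (Δt/2)·∑_{i=1,2}(c̃_j^i·q_j^i - z₁·r(x_j^i)·P_j^i)`. -/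
def rbarnew (N : ℕ) (Φ cP cM u Dm Dp : ℕ → ℝ) (q ct P : ℕ → Fin 2 → ℝ)
    (α αt z1 Δx Δt : ℝ) (j : ℕ) : ℝ :=
  rbar Φ cP cM j
    + (Δt / Δx) * (ucB N u cP cM α (j - 1) - ucB N u cP cM α j)
    - (Δt / Δx) * (FhatB N Dm Dp cP cM αt Δx (j - 1) - FhatB N Dm Dp cP cM αt Δx j)
    + (Δt / 2) * ∑ i : Fin 2, (ct j i * q j i - z1 * rG Φ cP cM j i * P j i)

/-!
The update splits as a convective part, a diffusive part and one source part per Gauss point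
(Gauss quadrature is exact for `r`, so a third of `r̄ⱼ` can be shared among the source parts).
Under the CFL-type conditions each part is a combination of the nonnegative nodal values with
nonnegative coefficients, which gives `0 ≤ r̄ⱼⁿᵉʷ`.

For the upper bound, the data `1 - c`, `1 - c̃` with `z₂` in place of `z₁` satisfy the same
hypotheses, and the discrete pressure relation is exactly what turns their update into
`Φ̄ⱼ - r̄ⱼⁿᵉʷ`; the lower bound for these complementary data is the upper bound.
-/

lemma mu1_nonneg : 0 ≤ mu1 := by
  unfold mu1; positivity

lemma mu2_nonneg : 0 ≤ mu2 := by
  have : Real.sqrt 3 ≤ 3 := by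
    rw [Real.sqrt_le_left (by norm_num)]; norm_num
  unfold mu2; linarith

lemma mu1_add_mu2 : mu1 + mu2 = 1 := by
  unfold mu1 mu2; ring

section GaussPoints

variable (Φ cP cM : ℕ → ℝ) (j : ℕ)

lemma sum_rG : ∑ i, rG Φ cP cM j i = cP j * Φ (j - 1) + cM j * Φ j := by
  simp only [rG, Fin.sum_univ_two, if_true, one_ne_zero, if_false]
  linear_combination (cP j * Φ (j - 1) + cM j * Φ j) * mu1_add_mu2

variable {Φ cP cM j}

lemma rG_nonneg (hcP : 0 ≤ cP j) (hcM : 0 ≤ cM j) (hΦl : 0 ≤ Φ (j - 1)) (hΦr : 0 ≤ Φ j)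
    (i : Fin 2) : 0 ≤ rG Φ cP cM j i := by
  have := mu1_nonneg; have := mu2_nonneg
  unfold rG; split_ifs <;> positivity

lemma cG_mul_min_le_rG (hcP : 0 ≤ cP j) (hcM : 0 ≤ cM j) (i : Fin 2) :
    cG cP cM j i * min (Φ (j - 1)) (Φ j) ≤ rG Φ cP cM j i := by
  have hl := mul_le_mul_of_nonneg_left (min_le_left (Φ (j - 1)) (Φ j)) hcP
  have hr := mul_le_mul_of_nonneg_left (min_le_right (Φ (j - 1)) (Φ j)) hcM
  have h1 := mu1_nonneg; have h2 := mu2_nonneg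
  unfold cG rG; split_ifs <;> nlinarith [mul_le_mul_of_nonneg_left hl h1,
    mul_le_mul_of_nonneg_left hr h1, mul_le_mul_of_nonneg_left hl h2,
    mul_le_mul_of_nonneg_left hr h2]

end GaussPoints

lemma source_nonneg {Δt z R P q c m : ℝ} (hΔt : 0 ≤ Δt) (hz : 0 ≤ z) (hR : 0 ≤ R)
    (hP : 6 * Δt * z * max P 0 ≤ 1) (hc : 0 ≤ c)
    (hq : q < 0 → c * m ≤ R ∧ 6 * Δt * (-q) ≤ m) :
    0 ≤ R / 6 + Δt / 2 * (c * q - z * R * P) := by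
  have hsink : Δt * (z * R * P) ≤ R / 6 :=
    calc Δt * (z * R * P) ≤ Δt * (z * R * max P 0) := by
          gcongr; exact le_max_left P 0
      _ = 6 * Δt * z * max P 0 * R / 6 := by ring
      _ ≤ R / 6 := by gcongr; exact mul_le_of_le_one_left hR hP
  have hinjection : -(R / 6) ≤ Δt * (c * q) := by
    rcases lt_or_ge q 0 with hq0 | hq0
    · obtain ⟨hcm, hqm⟩ := hq hq0
      nlinarith [mul_le_mul_of_nonneg_left hqm hc]
    · have : 0 ≤ Δt * (c * q) := by positivity
      linarith
  linarith

section Fluxes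

variable {N : ℕ} {Φ cP cM u Dm Dp : ℕ → ℝ} {α αt Δx Δt : ℝ}

lemma inflow_part_nonneg (hΔx : 0 < Δx) (hΔt : 0 ≤ Δt) {j : ℕ} (hj : j + 1 ≤ N)
    (hΦ : 0 ≤ Φ j) (hcP : 0 ≤ cP (j + 1)) (hcM : ∀ j, 1 ≤ j → j ≤ N → 0 ≤ cM j)
    (hα : ∀ j, 1 ≤ j → j ≤ N - 1 → max (u j) 0 < α)
    (hCFL2 : ∀ j, 1 ≤ j → j ≤ N - 1 → 6 * (Δt / Δx) * (α - u j) ≤ Φ j) :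
    0 ≤ cP (j + 1) * Φ j / 6 + Δt / Δx * ucB N u cP cM α j := by
  have hlam : 0 ≤ Δt / Δx := by positivity
  unfold ucB uc
  split_ifs with hint
  · have hαj := hα j hint.1 hint.2
    have hCFL := hCFL2 j hint.1 hint.2
    nlinarith [mul_nonneg hcP (sub_nonneg.2 hCFL),
      mul_nonneg (mul_nonneg hlam (lt_of_le_of_lt (le_max_right _ _) hαj).le)
        (hcM j hint.1 (by omega))]
  · simp only [mul_zero, add_zero]; positivity

lemma outflow_part_nonneg (hΔx : 0 < Δx) (hΔt : 0 ≤ Δt) {j : ℕ} (hj : j ≤ N)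
    (hΦ : 0 ≤ Φ j) (hcM : 0 ≤ cM j) (hcP : ∀ j, 1 ≤ j → j ≤ N → 0 ≤ cP j)
    (hα : ∀ j, 1 ≤ j → j ≤ N - 1 → max (u j) 0 < α)
    (hCFL1 : ∀ j, 1 ≤ j → j ≤ N - 1 → 6 * α * (Δt / Δx) ≤ Φ j) :
    0 ≤ cM j * Φ j / 6 - Δt / Δx * ucB N u cP cM α j := by
  have hlam : 0 ≤ Δt / Δx := by positivity
  unfold ucB uc
  split_ifs with hint
  · have hαj := hα j hint.1 hint.2
    have hCFL := hCFL1 j hint.1 hint.2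
    nlinarith [mul_nonneg hcM (sub_nonneg.2 hCFL),
      mul_nonneg (mul_nonneg hlam (sub_nonneg.2 (le_max_left _ _ |>.trans hαj.le)))
        (hcP (j + 1) (by omega) (by omega))]
  · simp only [mul_zero, sub_zero]; positivity

lemma mul_Fhat_eq (hΔx : Δx ≠ 0) (k : ℕ) :
    Δt / Δx * Fhat Dm Dp cP cM αt Δx k = Δt / Δx ^ 2 *
      (Dm k / 2 * (cM k - cP k) + Dp k / 2 * (cM (k + 1) - cP (k + 1))
        + αt * (cP (k + 1) - cM k)) := by
  unfold Fhat; field_simp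

lemma mul_Fhat_le (hΔx : 0 < Δx) (hΔt : 0 ≤ Δt) {k : ℕ} (hDm : 0 ≤ Dm k) (hDp : 0 ≤ Dp k)
    (hαt : Dm k / 2 ≤ αt) (hcP : 0 ≤ cP k) (hcM : 0 ≤ cM k) (hcP' : 0 ≤ cP (k + 1)) :
    Δt / Δx * Fhat Dm Dp cP cM αt Δx k
      ≤ Δt / Δx ^ 2 * (αt * cP (k + 1) + Dp k / 2 * cM (k + 1)) := by
  rw [mul_Fhat_eq hΔx.ne']
  refine mul_le_mul_of_nonneg_left ?_ (by positivity)
  nlinarith [mul_nonneg (sub_nonneg.2 hαt) hcM, mul_nonneg hDm hcP, mul_nonneg hDp hcP']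

lemma neg_le_mul_Fhat (hΔx : 0 < Δx) (hΔt : 0 ≤ Δt) {k : ℕ} (hDm : 0 ≤ Dm k)
    (hDp : 0 ≤ Dp k) (hαt : Dp k / 2 ≤ αt) (hcM : 0 ≤ cM k) (hcP' : 0 ≤ cP (k + 1))
    (hcM' : 0 ≤ cM (k + 1)) :
    -(Δt / Δx ^ 2 * (Dm k / 2 * cP k + αt * cM k)) ≤ Δt / Δx * Fhat Dm Dp cP cM αt Δx k := by
  rw [mul_Fhat_eq hΔx.ne', ← mul_neg]
  refine mul_le_mul_of_nonneg_left ?_ (by positivity)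
  nlinarith [mul_nonneg (sub_nonneg.2 hαt) hcP', mul_nonneg hDm hcM, mul_nonneg hDp hcM']

/-- Unlike the convective flux, the diffusive flux at a node involves both traces of the cell,
so its two nodes cannot be bounded separately. -/
lemma diffusive_part_nonneg (hΔx : 0 < Δx) (hΔt : 0 ≤ Δt) {k : ℕ} (hk : k + 1 ≤ N)
    (hΦ : ∀ j, j ≤ N → 0 < Φ j)
    (hDm : ∀ j, 1 ≤ j → j ≤ N - 1 → 0 ≤ Dm j)
    (hDp : ∀ j, 1 ≤ j → j ≤ N - 1 → 0 ≤ Dp j)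
    (hcP : ∀ j, 1 ≤ j → j ≤ N → 0 ≤ cP j) (hcM : ∀ j, 1 ≤ j → j ≤ N → 0 ≤ cM j)
    (hαt : ∀ j, 1 ≤ j → j ≤ N - 1 → Dm j / 2 < αt ∧ Dp j / 2 < αt)
    (hCFL3 : ∀ j, 1 ≤ j → j ≤ N - 1 → (Δt / Δx ^ 2) * (3 * Dm j + 6 * αt) ≤ Φ (j - 1))
    (hCFL4 : ∀ j, 2 ≤ j → j ≤ N → (Δt / Δx ^ 2) * (3 * Dp (j - 1) + 6 * αt) ≤ Φ j)
    (hCFL5 : ∀ j, j ≤ N → 6 * (Δt / Δx ^ 2) * αt ≤ Φ j) :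
    0 ≤ (cP (k + 1) * Φ k + cM (k + 1) * Φ (k + 1)) / 6
      - Δt / Δx * (FhatB N Dm Dp cP cM αt Δx k - FhatB N Dm Dp cP cM αt Δx (k + 1)) := by
  have hΛ : 0 ≤ Δt / Δx ^ 2 := by positivity
  have ha := hcP (k + 1) (by omega) hk
  have hb := hcM (k + 1) (by omega) hk
  have hCFL3' : 1 ≤ k + 1 → k + 1 ≤ N - 1 → Δt / Δx ^ 2 * (3 * Dm (k + 1) + 6 * αt) ≤ Φ k :=
    hCFL3 (k + 1)
  have hCFL4' : 2 ≤ k + 1 → Δt / Δx ^ 2 * (3 * Dp k + 6 * αt) ≤ Φ (k + 1) :=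
    fun h => hCFL4 (k + 1) h hk
  unfold FhatB
  split_ifs with hL hR hR
  · have hx := mul_Fhat_le hΔx hΔt (hDm k hL.1 hL.2) (hDp k hL.1 hL.2) (hαt k hL.1 hL.2).1.le
      (hcP k hL.1 (by omega)) (hcM k hL.1 (by omega)) ha
    have hy := neg_le_mul_Fhat hΔx hΔt (hDm _ hR.1 hR.2) (hDp _ hR.1 hR.2)
      (hαt _ hR.1 hR.2).2.le hb (hcP (k + 2) (by omega) (by omega))
      (hcM (k + 2) (by omega) (by omega))
    nlinarith [mul_nonneg ha (sub_nonneg.2 (hCFL3' hR.1 hR.2)),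
      mul_nonneg hb (sub_nonneg.2 (hCFL4' (by omega)))]
  · have hx := mul_Fhat_le hΔx hΔt (hDm k hL.1 hL.2) (hDp k hL.1 hL.2) (hαt k hL.1 hL.2).1.le
      (hcP k hL.1 (by omega)) (hcM k hL.1 (by omega)) ha
    have hαt0 : 0 ≤ αt := by linarith [hDm k hL.1 hL.2, (hαt k hL.1 hL.2).1]
    nlinarith [mul_nonneg hΛ hαt0, mul_nonneg ha (sub_nonneg.2 (hCFL5 k (by omega))),
      mul_nonneg hb (sub_nonneg.2 (hCFL4' (by omega)))]
  · have hy := neg_le_mul_Fhat hΔx hΔt (hDm _ hR.1 hR.2) (hDp _ hR.1 hR.2)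
      (hαt _ hR.1 hR.2).2.le hb (hcP (k + 2) (by omega) (by omega))
      (hcM (k + 2) (by omega) (by omega))
    have hαt0 : 0 ≤ αt := by linarith [hDm _ hR.1 hR.2, (hαt _ hR.1 hR.2).1]
    nlinarith [mul_nonneg hΛ hαt0, mul_nonneg ha (sub_nonneg.2 (hCFL3' hR.1 hR.2)),
      mul_nonneg hb (sub_nonneg.2 (hCFL5 (k + 1) hk))]
  · have := hΦ k (by omega)
    have := hΦ (k + 1) hk
    simp only [sub_zero, mul_zero]
    positivity

end Fluxes

lemma rbarnew_eq (N : ℕ) (Φ cP cM u Dm Dp : ℕ → ℝ) (q ct P : ℕ → Fin 2 → ℝ)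
    (α αt z Δx Δt : ℝ) (j : ℕ) :
    rbarnew N Φ cP cM u Dm Dp q ct P α αt z Δx Δt j =
      ((cP j * Φ (j - 1) + cM j * Φ j) / 6
          + Δt / Δx * (ucB N u cP cM α (j - 1) - ucB N u cP cM α j))
      + ((cP j * Φ (j - 1) + cM j * Φ j) / 6
          - Δt / Δx * (FhatB N Dm Dp cP cM αt Δx (j - 1) - FhatB N Dm Dp cP cM αt Δx j))
      + ∑ i, (rG Φ cP cM j i / 6 + Δt / 2 * (ct j i * q j i - z * rG Φ cP cM j i * P j i)) := by
  rw [Finset.sum_add_distrib, ← Finset.sum_div, sum_rG, ← Finset.mul_sum]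
  unfold rbarnew rbar
  ring

lemma rbarnew_nonneg {N : ℕ} {Δx Δt : ℝ} (hΔx : 0 < Δx) (hΔt : 0 < Δt)
    {Φ cP cM u Dm Dp : ℕ → ℝ} {q ct P : ℕ → Fin 2 → ℝ} {α αt z : ℝ}
    (hΦ : ∀ j, j ≤ N → 0 < Φ j)
    (hDm : ∀ j, 1 ≤ j → j ≤ N - 1 → 0 ≤ Dm j)
    (hDp : ∀ j, 1 ≤ j → j ≤ N - 1 → 0 ≤ Dp j)
    (hcP : ∀ j, 1 ≤ j → j ≤ N → 0 ≤ cP j) (hcM : ∀ j, 1 ≤ j → j ≤ N → 0 ≤ cM j)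
    (hα : ∀ j, 1 ≤ j → j ≤ N - 1 → max (u j) 0 < α)
    (hαt : ∀ j, 1 ≤ j → j ≤ N - 1 → Dm j / 2 < αt ∧ Dp j / 2 < αt)
    (hCFL1 : ∀ j, 1 ≤ j → j ≤ N - 1 → 6 * α * (Δt / Δx) ≤ Φ j)
    (hCFL2 : ∀ j, 1 ≤ j → j ≤ N - 1 → 6 * (Δt / Δx) * (α - u j) ≤ Φ j)
    (hCFL3 : ∀ j, 1 ≤ j → j ≤ N - 1 → (Δt / Δx ^ 2) * (3 * Dm j + 6 * αt) ≤ Φ (j - 1))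
    (hCFL4 : ∀ j, 2 ≤ j → j ≤ N → (Δt / Δx ^ 2) * (3 * Dp (j - 1) + 6 * αt) ≤ Φ j)
    (hCFL5 : ∀ j, j ≤ N → 6 * (Δt / Δx ^ 2) * αt ≤ Φ j)
    (hz : 0 ≤ z) (hP : ∀ j, 1 ≤ j → j ≤ N → ∀ i : Fin 2, 6 * Δt * z * max (P j i) 0 ≤ 1)
    (hct : ∀ j, 1 ≤ j → j ≤ N → ∀ i : Fin 2, 0 ≤ ct j i)
    (hq : ∀ j, 1 ≤ j → j ≤ N → ∀ i : Fin 2, q j i < 0 →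
      ct j i = cG cP cM j i ∧ 6 * Δt * (-q j i) < min (Φ (j - 1)) (Φ j))
    {j : ℕ} (hj1 : 1 ≤ j) (hjN : j ≤ N) :
    0 ≤ rbarnew N Φ cP cM u Dm Dp q ct P α αt z Δx Δt j := by
  have hsource : ∀ i, 0 ≤ rG Φ cP cM j i / 6
      + Δt / 2 * (ct j i * q j i - z * rG Φ cP cM j i * P j i) := fun i =>
    source_nonneg hΔt.le hz
      (rG_nonneg (hcP j hj1 hjN) (hcM j hj1 hjN) (hΦ _ (by omega)).le (hΦ j hjN).le i)
      (hP j hj1 hjN i) (hct j hj1 hjN i) fun hqi => by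
        obtain ⟨hcti, hqi⟩ := hq j hj1 hjN i hqi
        exact ⟨hcti ▸ cG_mul_min_le_rG (hcP j hj1 hjN) (hcM j hj1 hjN) i, hqi.le⟩
  obtain ⟨k, rfl⟩ : ∃ k, j = k + 1 := ⟨j - 1, by omega⟩
  have hin := inflow_part_nonneg hΔx hΔt.le hjN (hΦ k (by omega)).le (hcP _ hj1 hjN) hcM hα hCFL2
  have hout := outflow_part_nonneg hΔx hΔt.le hjN (hΦ _ hjN).le (hcM _ hj1 hjN) hcP hα hCFL1
  have hdiff := diffusive_part_nonneg hΔx hΔt.le hjN hΦ hDm hDp hcP hcM hαt hCFL3 hCFL4 hCFL5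
  rw [rbarnew_eq, Nat.add_sub_cancel]
  linarith [Finset.sum_nonneg fun i (_ : i ∈ Finset.univ) => hsource i]

section Complement

variable {N : ℕ} {Φ cP cM u Dm Dp : ℕ → ℝ} {α αt Δx : ℝ}

lemma ucB_one_sub (k : ℕ) :
    ucB N u (fun m => 1 - cP m) (fun m => 1 - cM m) α k = uhatB N u k - ucB N u cP cM α k := by
  unfold ucB uhatB uc
  split_ifs <;> ring

lemma FhatB_one_sub (k : ℕ) :
    FhatB N Dm Dp (fun m => 1 - cP m) (fun m => 1 - cM m) αt Δx k
      = -FhatB N Dm Dp cP cM αt Δx k := by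
  unfold FhatB Fhat
  split_ifs <;> ring

lemma rG_one_sub (j : ℕ) (i : Fin 2) :
    rG Φ (fun m => 1 - cP m) (fun m => 1 - cM m) j i = phiG Φ j i - rG Φ cP cM j i := by
  unfold rG phiG
  split_ifs <;> ring

lemma cG_one_sub (j : ℕ) (i : Fin 2) :
    cG (fun m => 1 - cP m) (fun m => 1 - cM m) j i = 1 - cG cP cM j i := by
  unfold cG
  split_ifs <;> linear_combination mu1_add_mu2

lemma rbarnew_one_sub {Δt z1 z2 : ℝ} {q ct P : ℕ → Fin 2 → ℝ} {j : ℕ} (hΔx : Δx ≠ 0)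
    (hpress : (Δx / 2) * ∑ i : Fin 2,
        (z1 * rG Φ cP cM j i + z2 * (phiG Φ j i - rG Φ cP cM j i)) * P j i
      = uhatB N u (j - 1) - uhatB N u j + (Δx / 2) * ∑ i : Fin 2, q j i) :
    rbarnew N Φ (fun m => 1 - cP m) (fun m => 1 - cM m) u Dm Dp q
        (fun m i => 1 - ct m i) P α αt z2 Δx Δt j
      = (Φ (j - 1) + Φ j) / 2 - rbarnew N Φ cP cM u Dm Dp q ct P α αt z1 Δx Δt j := by
  have hpress' : Δt / 2 * ∑ i : Fin 2,
        (z1 * rG Φ cP cM j i + z2 * (phiG Φ j i - rG Φ cP cM j i)) * P j i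
      = Δt / Δx * (uhatB N u (j - 1) - uhatB N u j) + Δt / 2 * ∑ i : Fin 2, q j i := by
    linear_combination (norm := skip) (Δt / Δx) * hpress
    field_simp
    ring
  simp only [Fin.sum_univ_two] at hpress'
  simp only [rbarnew, rbar, Fin.sum_univ_two, ucB_one_sub, FhatB_one_sub, rG_one_sub]
  linear_combination (-1 : ℝ) * hpress'

end Complement

theorem bound_preserving_cell_averages_1d_general
    (N : ℕ) (Δx Δt : ℝ) (hΔx : 0 < Δx) (hΔt : 0 < Δt)
    (Φ cP cM u Dm Dp : ℕ → ℝ) (q ct P : ℕ → Fin 2 → ℝ) (α αt z1 z2 : ℝ)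
    (hΦ : ∀ j, j ≤ N → 0 < Φ j)
    (hDm : ∀ j, 1 ≤ j → j ≤ N - 1 → 0 ≤ Dm j)
    (hDp : ∀ j, 1 ≤ j → j ≤ N - 1 → 0 ≤ Dp j)
    -- (i) all nodal concentration values lie in [0,1]
    (hc : ∀ j, 1 ≤ j → j ≤ N →
      (0 ≤ cP j ∧ cP j ≤ 1) ∧ (0 ≤ cM j ∧ cM j ≤ 1))
    -- (ii)
    (hα : ∀ j, 1 ≤ j → j ≤ N - 1 → max (u j) 0 < α)
    -- (iii)
    (hαt : ∀ j, 1 ≤ j → j ≤ N - 1 → Dm j / 2 < αt ∧ Dp j / 2 < αt)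
    -- (iv)
    (hCFL1 : ∀ j, 1 ≤ j → j ≤ N - 1 → 6 * α * (Δt / Δx) ≤ Φ j)
    (hCFL2 : ∀ j, 1 ≤ j → j ≤ N - 1 → 6 * (Δt / Δx) * (α - u j) ≤ Φ j)
    -- (v)
    (hCFL3 : ∀ j, 1 ≤ j → j ≤ N - 1 → (Δt / Δx ^ 2) * (3 * Dm j + 6 * αt) ≤ Φ (j - 1))
    (hCFL4 : ∀ j, 2 ≤ j → j ≤ N → (Δt / Δx ^ 2) * (3 * Dp (j - 1) + 6 * αt) ≤ Φ j)
    (hCFL5 : ∀ j, j ≤ N → 6 * (Δt / Δx ^ 2) * αt ≤ Φ j)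
    -- (vi)
    (hz1 : 0 ≤ z1) (hz2 : 0 ≤ z2)
    (hP1 : ∀ j, 1 ≤ j → j ≤ N → ∀ i : Fin 2, 6 * Δt * z1 * max (P j i) 0 ≤ 1)
    (hP2 : ∀ j, 1 ≤ j → j ≤ N → ∀ i : Fin 2, 6 * Δt * z2 * max (P j i) 0 ≤ 1)
    (hct : ∀ j, 1 ≤ j → j ≤ N → ∀ i : Fin 2, 0 ≤ ct j i ∧ ct j i ≤ 1)
    (hq2 : ∀ j, 1 ≤ j → j ≤ N → ∀ i : Fin 2, q j i < 0 →
      ct j i = cG cP cM j i ∧ 6 * Δt * (-q j i) < min (Φ (j - 1)) (Φ j))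
    -- (vii) discrete pressure relation
    (hpress : ∀ j, 1 ≤ j → j ≤ N →
      (Δx / 2) * ∑ i : Fin 2,
          (z1 * rG Φ cP cM j i + z2 * (phiG Φ j i - rG Φ cP cM j i)) * P j i
        = uhatB N u (j - 1) - uhatB N u j + (Δx / 2) * ∑ i : Fin 2, q j i) :
    ∀ j, 1 ≤ j → j ≤ N →
      0 ≤ rbarnew N Φ cP cM u Dm Dp q ct P α αt z1 Δx Δt j ∧
      rbarnew N Φ cP cM u Dm Dp q ct P α αt z1 Δx Δt j ≤ (Φ (j - 1) + Φ j) / 2 := by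
  intro j hj1 hjN
  have hcP : ∀ j, 1 ≤ j → j ≤ N → 0 ≤ cP j := fun j h1 h2 => (hc j h1 h2).1.1
  have hcM : ∀ j, 1 ≤ j → j ≤ N → 0 ≤ cM j := fun j h1 h2 => (hc j h1 h2).2.1
  refine ⟨rbarnew_nonneg hΔx hΔt hΦ hDm hDp hcP hcM hα hαt hCFL1 hCFL2 hCFL3 hCFL4 hCFL5
    hz1 hP1 (fun j h1 h2 i => (hct j h1 h2 i).1) hq2 hj1 hjN, ?_⟩
  have hcompl := rbarnew_nonneg (cP := fun m => 1 - cP m) (cM := fun m => 1 - cM m)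
    (ct := fun m i => 1 - ct m i) hΔx hΔt hΦ hDm hDp
    (fun j h1 h2 => sub_nonneg.2 (hc j h1 h2).1.2) (fun j h1 h2 => sub_nonneg.2 (hc j h1 h2).2.2)
    hα hαt hCFL1 hCFL2 hCFL3 hCFL4 hCFL5 hz2 hP2
    (fun j h1 h2 i => sub_nonneg.2 (hct j h1 h2 i).2)
    (fun j h1 h2 i hqi => (hq2 j h1 h2 i hqi).imp_left fun h => by rw [cG_one_sub, h])
    hj1 hjN
  rw [rbarnew_one_sub hΔx.ne' (hpress j hj1 hjN)] at hcompl
  linarith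

/-- Theorem 3.2 (1D, Euler forward): with `0 ≤ r ≤ Φ` nodally, a consistent flux pair and
the discrete pressure relation, the new cell averages satisfy `0 ≤ r̄_j^{new} ≤ Φ̄_j`. -/
theorem bound_preserving_cell_averages_1d
    (N : ℕ) (hN : 4 ≤ N) (Δx Δt : ℝ) (hΔx : 0 < Δx) (hΔt : 0 < Δt)
    (Φ cP cM u Dm Dp : ℕ → ℝ) (q ct P : ℕ → Fin 2 → ℝ) (α αt z1 z2 : ℝ)
    (hΦ : ∀ j, j ≤ N → 0 < Φ j)
    (hDm : ∀ j, 1 ≤ j → j ≤ N - 1 → 0 ≤ Dm j)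
    (hDp : ∀ j, 1 ≤ j → j ≤ N - 1 → 0 ≤ Dp j)
    -- (i) all nodal concentration values lie in [0,1]
    (hc : ∀ j, 1 ≤ j → j ≤ N →
      (0 ≤ cP j ∧ cP j ≤ 1) ∧ (0 ≤ cM j ∧ cM j ≤ 1))
    -- (ii)
    (hα : ∀ j, 1 ≤ j → j ≤ N - 1 → max (u j) 0 < α)
    -- (iii)
    (hαt : ∀ j, 1 ≤ j → j ≤ N - 1 → Dm j / 2 < αt ∧ Dp j / 2 < αt)
    -- (iv)
    (hCFL1 : ∀ j, 1 ≤ j → j ≤ N - 1 → 6 * α * (Δt / Δx) ≤ Φ j)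
    (hCFL2 : ∀ j, 1 ≤ j → j ≤ N - 1 → 6 * (Δt / Δx) * (α - u j) ≤ Φ j)
    -- (v)
    (hCFL3 : ∀ j, 1 ≤ j → j ≤ N - 1 → (Δt / Δx ^ 2) * (3 * Dm j + 6 * αt) ≤ Φ (j - 1))
    (hCFL4 : ∀ j, 2 ≤ j → j ≤ N → (Δt / Δx ^ 2) * (3 * Dp (j - 1) + 6 * αt) ≤ Φ j)
    (hCFL5 : ∀ j, j ≤ N → 6 * (Δt / Δx ^ 2) * αt ≤ Φ j)
    -- (vi)
    (hz1 : 0 ≤ z1) (hz2 : 0 ≤ z2)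
    (hP1 : ∀ j, 1 ≤ j → j ≤ N → ∀ i : Fin 2, 6 * Δt * z1 * max (P j i) 0 ≤ 1)
    (hP2 : ∀ j, 1 ≤ j → j ≤ N → ∀ i : Fin 2, 6 * Δt * z2 * max (P j i) 0 ≤ 1)
    (hct : ∀ j, 1 ≤ j → j ≤ N → ∀ i : Fin 2, 0 ≤ ct j i ∧ ct j i ≤ 1)
    (hq2 : ∀ j, 1 ≤ j → j ≤ N → ∀ i : Fin 2, q j i < 0 →
      ct j i = cG cP cM j i ∧ 6 * Δt * (-q j i) < min (Φ (j - 1)) (Φ j))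
    -- (vii) discrete pressure relation
    (hpress : ∀ j, 1 ≤ j → j ≤ N →
      (Δx / 2) * ∑ i : Fin 2,
          (z1 * rG Φ cP cM j i + z2 * (phiG Φ j i - rG Φ cP cM j i)) * P j i
        = uhatB N u (j - 1) - uhatB N u j + (Δx / 2) * ∑ i : Fin 2, q j i) :
    ∀ j, 1 ≤ j → j ≤ N →
      0 ≤ rbarnew N Φ cP cM u Dm Dp q ct P α αt z1 Δx Δt j ∧
      rbarnew N Φ cP cM u Dm Dp q ct P α αt z1 Δx Δt j ≤ (Φ (j - 1) + Φ j) / 2 :=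
  bound_preserving_cell_averages_1d_general N Δx Δt hΔx hΔt Φ cP cM u Dm Dp q ct P α αt z1 z2 hΦ hDm
    hDp hc hα hαt hCFL1 hCFL2 hCFL3 hCFL4 hCFL5 hz1 hz2 hP1 hP2 hct hq2 hpress

end DG1D
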